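/- arXiv:2604.05131 — 2 statements merged into one kernel-verified Lean document; each statement's English description precedes it below -/
import Mathlib

section
/- Let S be a finite state space, δ ∈ [0,1), r̄ > 0. Let r, r' : S → ℝ with ‖r‖_∞ ≤ r̄, ‖r'‖_∞ ≤ r̄, and let P, P' be Markov kernels on S. Let V and V' be the unique bounded fixed points of the Bellman operators V(s) = r(s) + δ Σ_{s'} P(s'|s) V(s') and V'(s) = r'(s) + δ Σ_{s'} P'(s'|s) V'(s'). If sup_s |r(s) − r'(s)| ≤ ε_r and sup_s ‖P(·|s) − P'(·|s)‖_TV ≤ ε_P, then sup_s |V(s) − V'(s)| ≤ (ε_r + 2δ r̄ ε_P/(1−δ)) / (1−δ). -/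
open Finset

/-- Total variation distance between two functions on a finite set. -/
noncomputable def tv {X : Type*} [Fintype X] (p q : X → ℝ) : ℝ :=
  (1/2) * ∑ x, |p x - q x|

theorem simulation_lemma {S : Type*} [Fintype S]
    (δ : ℝ) (hδ : 0 ≤ δ) (hδ1 : δ < 1)
    (rbar : ℝ) (hrbar : 0 < rbar)
    (r r' : S → ℝ) (hr : ∀ s, |r s| ≤ rbar) (hr' : ∀ s, |r' s| ≤ rbar)
    (P P' : S → S → ℝ)
    (hPnn : ∀ s s', 0 ≤ P s s') (hPsum : ∀ s, ∑ s', P s s' = 1)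
    (hP'nn : ∀ s s', 0 ≤ P' s s') (hP'sum : ∀ s, ∑ s', P' s s' = 1)
    (V V' : S → ℝ)
    (hV : ∀ s, V s = r s + δ * ∑ s', P s s' * V s')
    (hV' : ∀ s, V' s = r' s + δ * ∑ s', P' s s' * V' s')
    (εr εP : ℝ)
    (hεr : ∀ s, |r s - r' s| ≤ εr)
    (hεP : ∀ s, tv (P s) (P' s) ≤ εP) :
    ∀ s, |V s - V' s| ≤ (εr + 2 * δ * rbar * εP / (1 - δ)) / (1 - δ) := by
  intro s
  have hd : (0:ℝ) < 1 - δ := by linarith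
  -- bound on V'
  obtain ⟨s0, -, hs0⟩ := Finset.exists_max_image Finset.univ (fun t => |V' t|)
    ⟨s, Finset.mem_univ s⟩
  set B := |V' s0| with hBdef
  have hBle : ∀ t, |V' t| ≤ B := fun t => hs0 t (Finset.mem_univ t)
  have hBbound : B ≤ rbar / (1 - δ) := by
    have h1 : B ≤ rbar + δ * B := by
      have heq := hV' s0
      have habs : |V' s0| ≤ |r' s0| + δ * |∑ s', P' s0 s' * V' s'| := by
        rw [heq]
        calc |r' s0 + δ * ∑ s', P' s0 s' * V' s'|
            ≤ |r' s0| + |δ * ∑ s', P' s0 s' * V' s'| := abs_add_le _ _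
          _ = |r' s0| + δ * |∑ s', P' s0 s' * V' s'| := by
              rw [abs_mul, abs_of_nonneg hδ]
      have hsum : |∑ s', P' s0 s' * V' s'| ≤ B := by
        calc |∑ s', P' s0 s' * V' s'| ≤ ∑ s', |P' s0 s' * V' s'| :=
              Finset.abs_sum_le_sum_abs _ _
          _ ≤ ∑ s', P' s0 s' * B := by
              apply Finset.sum_le_sum
              intro i _
              rw [abs_mul, abs_of_nonneg (hP'nn s0 i)]
              exact mul_le_mul_of_nonneg_left (hBle i) (hP'nn s0 i)
          _ = B := by rw [← Finset.sum_mul, hP'sum, one_mul]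
      calc B = |V' s0| := rfl
        _ ≤ |r' s0| + δ * |∑ s', P' s0 s' * V' s'| := habs
        _ ≤ rbar + δ * B := by
            have := hr' s0
            nlinarith [mul_le_mul_of_nonneg_left hsum hδ]
    rw [le_div_iff₀ hd]; nlinarith
  -- max of |V - V'|
  obtain ⟨s1, -, hs1⟩ := Finset.exists_max_image Finset.univ (fun t => |V t - V' t|)
    ⟨s, Finset.mem_univ s⟩
  set M := |V s1 - V' s1| with hMdef
  have hMle : ∀ t, |V t - V' t| ≤ M := fun t => hs1 t (Finset.mem_univ t)
  -- key decomposition and bound at any t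
  have hkey : ∀ t, |V t - V' t| ≤ εr + δ * (2 * εP * (rbar / (1 - δ))) + δ * M := by
    intro t
    have hsplit : V t - V' t = (r t - r' t)
        + δ * (∑ s', (P t s' - P' t s') * V' s')
        + δ * (∑ s', P t s' * (V s' - V' s')) := by
      have hsum : (∑ s', (P t s' - P' t s') * V' s')
          + ∑ s', P t s' * (V s' - V' s')
          = (∑ s', P t s' * V s') - ∑ s', P' t s' * V' s' := by
        rw [← Finset.sum_add_distrib, ← Finset.sum_sub_distrib]
        apply Finset.sum_congr rfl
        intros; ring
      rw [hV t, hV' t]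
      nlinarith [hsum]
    have h1 : |∑ s', (P t s' - P' t s') * V' s'| ≤ 2 * εP * (rbar / (1 - δ)) := by
      calc |∑ s', (P t s' - P' t s') * V' s'|
          ≤ ∑ s', |(P t s' - P' t s') * V' s'| := Finset.abs_sum_le_sum_abs _ _
        _ ≤ ∑ s', |P t s' - P' t s'| * (rbar / (1 - δ)) := by
            apply Finset.sum_le_sum
            intro i _
            rw [abs_mul]
            exact mul_le_mul_of_nonneg_left ((hBle i).trans hBbound) (abs_nonneg _)
        _ = (∑ s', |P t s' - P' t s'|) * (rbar / (1 - δ)) := by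
            rw [Finset.sum_mul]
        _ ≤ 2 * εP * (rbar / (1 - δ)) := by
            have htv := hεP t
            unfold tv at htv
            have hsn : (∑ s', |P t s' - P' t s'|) ≤ 2 * εP := by linarith
            apply mul_le_mul_of_nonneg_right hsn
            positivity
    have h2 : |∑ s', P t s' * (V s' - V' s')| ≤ M := by
      calc |∑ s', P t s' * (V s' - V' s')|
          ≤ ∑ s', |P t s' * (V s' - V' s')| := Finset.abs_sum_le_sum_abs _ _
        _ ≤ ∑ s', P t s' * M := by
            apply Finset.sum_le_sum
            intro i _
            rw [abs_mul, abs_of_nonneg (hPnn t i)]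
            exact mul_le_mul_of_nonneg_left (hMle i) (hPnn t i)
        _ = M := by rw [← Finset.sum_mul, hPsum, one_mul]
    calc |V t - V' t|
        ≤ |r t - r' t| + δ * |∑ s', (P t s' - P' t s') * V' s'|
          + δ * |∑ s', P t s' * (V s' - V' s')| := by
          have e1 : |δ * ∑ s', (P t s' - P' t s') * V' s'|
              = δ * |∑ s', (P t s' - P' t s') * V' s'| := by
            rw [abs_mul, abs_of_nonneg hδ]
          have e2 : |δ * ∑ s', P t s' * (V s' - V' s')|
              = δ * |∑ s', P t s' * (V s' - V' s')| := by
            rw [abs_mul, abs_of_nonneg hδ]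
          rw [hsplit]
          have t1 := abs_add_le (r t - r' t + δ * ∑ s', (P t s' - P' t s') * V' s')
            (δ * ∑ s', P t s' * (V s' - V' s'))
          have t2 := abs_add_le (r t - r' t) (δ * ∑ s', (P t s' - P' t s') * V' s')
          linarith
      _ ≤ εr + δ * (2 * εP * (rbar / (1 - δ))) + δ * M := by
          have := hεr t
          gcongr
    done
  have hM : M ≤ (εr + 2 * δ * rbar * εP / (1 - δ)) / (1 - δ) := by
    have := hkey s1
    rw [le_div_iff₀ hd]
    have h2 : 2 * δ * rbar * εP / (1 - δ) = δ * (2 * εP * (rbar / (1 - δ))) := by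
      field_simp
    nlinarith
  exact (hMle s).trans hM
end

section
/- Let V : X → ℝ and Ṽ : X̃ → ℝ be value functions for two players' games, let κ, ξ ≥ 0, and suppose: (i) for every strategy χ_i there exists a 'restricted' strategy χ̂_i with V_i(χ_i, χ*_{-i}) ≤ V_i(χ̂_i, χ*_{-i}) + κ; (ii) every restricted strategy profile χ̂ satisfies |V_i(χ̂) − Ṽ_i(χ̂^ℓ)| ≤ ξ where χ̂ = L(χ̂^ℓ) for a lifting map L; (iii) χ^{*,ℓ} is a Nash equilibrium of the game with values Ṽ, i.e., Ṽ_i(χ̂_i^ℓ, χ^{*,ℓ}_{-i}) ≤ Ṽ_i(χ^{*,ℓ}) for all deviations. Then χ* := L(χ^{*,ℓ}) satisfies V_i(χ_i, χ*_{-i}) ≤ V_i(χ*) + κ + 2ξ for all χ_i, i.e., χ* is a (κ+2ξ)-Nash equilibrium. -/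
/-! Chain of estimates for a deviation `χᵢ`: restricting it costs `κ`, passing to the truncated
game and back costs `ξ` at the deviated profile and `ξ` at the equilibrium, and in between the
truncated game has no profitable deviation. -/

open Function

section
variable {ι : Type*} [DecidableEq ι] {X Xℓ : ι → Type*}

theorem update_lift (L : ∀ i, Xℓ i → X i) (χℓ : ∀ i, Xℓ i) (i : ι) (y : Xℓ i) :
    update (fun j => L j (χℓ j)) i (L i y) = fun j => L j (update χℓ i y j) :=
  funext fun j => (apply_update L χℓ i y j).symm

theorem lift_value_restricted_deviation_le (L : ∀ i, Xℓ i → X i)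
    (V : (∀ i, X i) → ι → ℝ) (Vt : (∀ i, Xℓ i) → ι → ℝ) {ξ : ℝ} {χstarℓ : ∀ i, Xℓ i}
    (happrox : ∀ (χℓ : ∀ i, Xℓ i) (i : ι), |V (fun j => L j (χℓ j)) i - Vt χℓ i| ≤ ξ)
    (hnash : ∀ (i : ι) (χℓi : Xℓ i), Vt (update χstarℓ i χℓi) i ≤ Vt χstarℓ i)
    (i : ι) (y : Xℓ i) :
    V (update (fun j => L j (χstarℓ j)) i (L i y)) i ≤ V (fun j => L j (χstarℓ j)) i + 2 * ξ := by
  rw [update_lift]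
  have hdev := (abs_le.mp (happrox (update χstarℓ i y) i)).2
  have hstar := (abs_le.mp (happrox χstarℓ i)).1
  linarith [hnash i y]

end

theorem eps_nash_transfer_general {ι : Type*} [DecidableEq ι]
    (X Xℓ : ι → Type*)
    (L : ∀ i, Xℓ i → X i)
    (V : (∀ i, X i) → ι → ℝ) (Vt : (∀ i, Xℓ i) → ι → ℝ)
    (κ ξ : ℝ)
    (χstarℓ : ∀ i, Xℓ i)
    -- (i) restriction loss: any deviation is nearly matched by a restricted deviation
    (hrestrict : ∀ (i : ι) (χi : X i), ∃ χhatℓ : Xℓ i,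
      V (Function.update (fun j => L j (χstarℓ j)) i χi) i ≤
        V (Function.update (fun j => L j (χstarℓ j)) i (L i χhatℓ)) i + κ)
    -- (ii) value approximation between lifted profiles and truncated profiles
    (happrox : ∀ (χℓ : ∀ i, Xℓ i) (i : ι),
      |V (fun j => L j (χℓ j)) i - Vt χℓ i| ≤ ξ)
    -- (iii) χ^{*,ℓ} is a Nash equilibrium of the truncated game
    (hnash : ∀ (i : ι) (χℓi : Xℓ i),
      Vt (Function.update χstarℓ i χℓi) i ≤ Vt χstarℓ i) :
    ∀ (i : ι) (χi : X i),
      V (Function.update (fun j => L j (χstarℓ j)) i χi) i ≤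
        V (fun j => L j (χstarℓ j)) i + κ + 2 * ξ := by
  intro i χi
  obtain ⟨χhatℓ, hloss⟩ := hrestrict i χi
  linarith [lift_value_restricted_deviation_le L V Vt happrox hnash i χhatℓ]

theorem eps_nash_transfer {ι : Type*} [DecidableEq ι]
    (X Xℓ : ι → Type*)
    (L : ∀ i, Xℓ i → X i)
    (V : (∀ i, X i) → ι → ℝ) (Vt : (∀ i, Xℓ i) → ι → ℝ)
    (κ ξ : ℝ) (hκ : 0 ≤ κ) (hξ : 0 ≤ ξ)
    (χstarℓ : ∀ i, Xℓ i)
    -- (i) restriction loss: any deviation is nearly matched by a restricted deviation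
    (hrestrict : ∀ (i : ι) (χi : X i), ∃ χhatℓ : Xℓ i,
      V (Function.update (fun j => L j (χstarℓ j)) i χi) i ≤
        V (Function.update (fun j => L j (χstarℓ j)) i (L i χhatℓ)) i + κ)
    -- (ii) value approximation between lifted profiles and truncated profiles
    (happrox : ∀ (χℓ : ∀ i, Xℓ i) (i : ι),
      |V (fun j => L j (χℓ j)) i - Vt χℓ i| ≤ ξ)
    -- (iii) χ^{*,ℓ} is a Nash equilibrium of the truncated game
    (hnash : ∀ (i : ι) (χℓi : Xℓ i),
      Vt (Function.update χstarℓ i χℓi) i ≤ Vt χstarℓ i) :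
    ∀ (i : ι) (χi : X i),
      V (Function.update (fun j => L j (χstarℓ j)) i χi) i ≤
        V (fun j => L j (χstarℓ j)) i + κ + 2 * ξ :=
  eps_nash_transfer_general X Xℓ L V Vt κ ξ χstarℓ hrestrict happrox hnash
end
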